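/- Let A, B ∈ ℝ³ be linearly independent and define V : ℝ → ℝ³ by V(t) := exp(−t·ad(B))(A) + B, where ad(B) : ℝ³ → ℝ³ is the linear map w ↦ B × w and exp denotes the exponential of a continuous linear endomorphism of ℝ³. Then there exists a constant C ∈ ℝ³ with V''(t) = V'(t) × V(t) + C for all t ∈ ℝ if and only if ⟨A, B⟩ = 0. (Equivalently: the pointwise product t ↦ exp(tA)exp(tB) of two one-parameter subgroups of SO(3) is a Riemannian cubic if and only if A is orthogonal to B.) -/

import Mathlib

noncomputable section
open scoped RealInnerProductSpace

/-- `ℝ³` with the Euclidean inner product. -/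
abbrev E3 : Type := EuclideanSpace ℝ (Fin 3)

/-- The cross product on `ℝ³`; with `⁅u,v⁆ := cross u v`, `ℝ³` is the Lie algebra `so(3)`. -/
def cross (u v : E3) : E3 :=
  (WithLp.equiv 2 (Fin 3 → ℝ)).symm
    ![u 1 * v 2 - u 2 * v 1, u 2 * v 0 - u 0 * v 2, u 0 * v 1 - u 1 * v 0]

/-- `ad(B) : ℝ³ → ℝ³`, `w ↦ B × w`, as a continuous linear endomorphism of `ℝ³`. -/
def adL (B : E3) : E3 →L[ℝ] E3 :=
  LinearMap.toContinuousLinearMap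
    { toFun := fun w => cross B w
      map_add' := by
        intro x y
        ext i
        fin_cases i <;>
          simp [cross, WithLp.equiv_symm_apply, PiLp.add_apply] <;> ring
      map_smul' := by
        intro c x
        ext i
        fin_cases i <;>
          simp [cross, WithLp.equiv_symm_apply, PiLp.smul_apply, smul_eq_mul] <;> ring }

/-! Write `W(t) = exp(−t·ad B) A`, so that `V = W + B`, `V' = −B × W` and `V'' = B × (B × W)`.
Since `ad B` is skew-adjoint and kills `B`, the flow preserves `⟨W, B⟩` and `⟨W, W⟩`, and a
triple product identity turns this into `V'' = V' × V + (⟨A, B⟩ W − ⟨A, A⟩ B)`. Hence `V` is a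
Lie quadratic iff `⟨A, B⟩ W` is constant; its derivative at `0` is `−⟨A, B⟩ (B × A)`, and
`B × A ≠ 0` by linear independence. -/

lemma hasDerivAt_exp_smul_apply {E : Type*} [NormedAddCommGroup E] [NormedSpace ℝ E]
    [CompleteSpace E] (N : E →L[ℝ] E) (x : E) (t : ℝ) :
    HasDerivAt (fun s : ℝ => NormedSpace.exp (s • N) x) (N (NormedSpace.exp (t • N) x)) t :=
  (ContinuousLinearMap.apply ℝ E x).hasFDerivAt.comp_hasDerivAt t (hasDerivAt_exp_smul_const' N t)

section LinearFlow

variable {F : Type*} [NormedAddCommGroup F] [InnerProductSpace ℝ F] {N : F →L[ℝ] F} {W : ℝ → F}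

lemma inner_eq_of_hasDerivAt_apply (hW : ∀ t, HasDerivAt W (N (W t)) t) {v : F}
    (hv : ∀ w, ⟪N w, v⟫ = 0) (t : ℝ) : ⟪W t, v⟫ = ⟪W 0, v⟫ := by
  have h : ∀ s, HasDerivAt (fun s => ⟪W s, v⟫) 0 s := fun s => by
    simpa [hv] using (hW s).inner ℝ (hasDerivAt_const s v)
  exact is_const_of_deriv_eq_zero (fun s => (h s).differentiableAt) (fun s => (h s).deriv) t 0

lemma inner_self_eq_of_hasDerivAt_apply (hW : ∀ t, HasDerivAt W (N (W t)) t)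
    (hN : ∀ w, ⟪N w, w⟫ = 0) (t : ℝ) : ⟪W t, W t⟫ = ⟪W 0, W 0⟫ := by
  have h : ∀ s, HasDerivAt (fun s => ⟪W s, W s⟫) 0 s := fun s => by
    have := (hW s).inner ℝ (hW s)
    rwa [real_inner_comm (N (W s)) (W s), hN, add_zero] at this
  exact is_const_of_deriv_eq_zero (fun s => (h s).differentiableAt) (fun s => (h s).deriv) t 0

end LinearFlow

lemma cross_eq_toLp_crossProduct (u v : E3) :
    cross u v = WithLp.toLp 2 (crossProduct (WithLp.ofLp u) (WithLp.ofLp v)) := by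
  simp [cross, cross_apply]

lemma inner_cross_left_self (u v : E3) : ⟪cross u v, u⟫ = 0 := by
  rw [EuclideanSpace.inner_eq_star_dotProduct, cross_eq_toLp_crossProduct]
  simp [dot_self_cross]

lemma inner_cross_right_self (u v : E3) : ⟪cross u v, v⟫ = 0 := by
  rw [EuclideanSpace.inner_eq_star_dotProduct, cross_eq_toLp_crossProduct]
  simp [dot_cross_self]

lemma cross_ne_zero_of_linearIndependent {u v : E3} (h : LinearIndependent ℝ ![u, v]) :
    cross u v ≠ 0 := by
  have h' : LinearIndependent ℝ ![u.ofLp, v.ofLp] := by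
    rw [← LinearMap.linearIndependent_iff_of_injOn
      (WithLp.linearEquiv 2 ℝ (Fin 3 → ℝ)).symm.toLinearMap (by simp)]
    convert h
    ext i : 1
    fin_cases i <;> rfl
  rw [cross_eq_toLp_crossProduct, Ne, WithLp.toLp_eq_zero]
  exact crossProduct_ne_zero_iff_linearIndependent.mpr h'

lemma cross_cross_self_eq (b w : E3) :
    cross b (cross b w) = cross (-cross b w) (w + b) + (⟪w, b⟫ • w - ⟪w, w⟫ • b) := by
  ext i
  fin_cases i <;>
    simp [cross, PiLp.inner_apply, Fin.sum_univ_three, EuclideanSpace.norm_sq_eq] <;> ring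

lemma adL_apply (B w : E3) : adL B w = cross B w := rfl

lemma hasDerivAt_exp_neg_smul_adL_apply (A B : E3) (t : ℝ) :
    HasDerivAt (fun s : ℝ => NormedSpace.exp (-(s • adL B)) A)
      (-cross B (NormedSpace.exp (-(t • adL B)) A)) t := by
  simp_rw [← smul_neg _ (adL B)]
  exact hasDerivAt_exp_smul_apply (-adL B) A t

lemma exp_neg_zero_smul_adL (B : E3) : NormedSpace.exp (-((0 : ℝ) • adL B)) = 1 := by
  rw [zero_smul ℝ (adL B), neg_zero, NormedSpace.exp_zero]

lemma inner_exp_neg_smul_adL_apply_right (A B : E3) (t : ℝ) :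
    ⟪NormedSpace.exp (-(t • adL B)) A, B⟫ = ⟪A, B⟫ := by
  simpa [exp_neg_zero_smul_adL] using inner_eq_of_hasDerivAt_apply (N := -adL B)
    (hasDerivAt_exp_neg_smul_adL_apply A B) (fun w => by simp [adL_apply, inner_cross_left_self]) t

lemma inner_self_exp_neg_smul_adL_apply (A B : E3) (t : ℝ) :
    ⟪NormedSpace.exp (-(t • adL B)) A, NormedSpace.exp (-(t • adL B)) A⟫ = ⟪A, A⟫ := by
  simpa [exp_neg_zero_smul_adL] using inner_self_eq_of_hasDerivAt_apply (N := -adL B)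
    (hasDerivAt_exp_neg_smul_adL_apply A B) (fun w => by simp [adL_apply, inner_cross_right_self]) t

def leftLieReduction (A B : E3) (t : ℝ) : E3 := NormedSpace.exp (-(t • adL B)) A + B

lemma deriv_leftLieReduction (A B : E3) :
    deriv (leftLieReduction A B) = fun t => -cross B (NormedSpace.exp (-(t • adL B)) A) :=
  funext fun t => ((hasDerivAt_exp_neg_smul_adL_apply A B t).add_const B).deriv

lemma iteratedDeriv_two_leftLieReduction (A B : E3) (t : ℝ) :
    iteratedDeriv 2 (leftLieReduction A B) t =
      cross B (cross B (NormedSpace.exp (-(t • adL B)) A)) := by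
  rw [iteratedDeriv_succ, iteratedDeriv_one, deriv_leftLieReduction]
  have h := ((adL B).hasFDerivAt.comp_hasDerivAt t (hasDerivAt_exp_neg_smul_adL_apply A B t)).neg
  exact h.deriv.trans (by simp only [map_neg, neg_neg]; rfl)

lemma iteratedDeriv_two_leftLieReduction_eq (A B : E3) (t : ℝ) :
    iteratedDeriv 2 (leftLieReduction A B) t =
      cross (deriv (leftLieReduction A B) t) (leftLieReduction A B t) +
        (⟪A, B⟫ • NormedSpace.exp (-(t • adL B)) A - ⟪A, A⟫ • B) := by
  rw [iteratedDeriv_two_leftLieReduction, deriv_leftLieReduction, leftLieReduction,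
    ← inner_exp_neg_smul_adL_apply_right A B t, ← inner_self_exp_neg_smul_adL_apply A B t]
  exact cross_cross_self_eq B _

/-- For linearly independent `A, B ∈ ℝ³`, the curve `V(t) = exp(−t·ad(B))(A) + B` (the left
Lie reduction of `t ↦ exp(tA)exp(tB)` in `SO(3)`) is a Lie quadratic, i.e. satisfies
`V'' = V' × V + C` for some constant `C`, if and only if `⟨A, B⟩ = 0`. -/
theorem stmt_4 (A B : E3) (hAB : LinearIndependent ℝ ![A, B]) :
    (∃ C : E3, ∀ t : ℝ,
        iteratedDeriv 2 (fun s : ℝ => NormedSpace.exp (-(s • adL B)) A + B) t =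
          cross (deriv (fun s : ℝ => NormedSpace.exp (-(s • adL B)) A + B) t)
              (NormedSpace.exp (-(t • adL B)) A + B) + C) ↔
      ⟪A, B⟫ = 0 := by
  change (∃ C : E3, ∀ t, iteratedDeriv 2 (leftLieReduction A B) t =
    cross (deriv (leftLieReduction A B) t) (leftLieReduction A B t) + C) ↔ _
  simp_rw [iteratedDeriv_two_leftLieReduction_eq, add_right_inj]
  constructor
  · rintro ⟨C, hC⟩
    have hconst : HasDerivAt (fun t : ℝ => ⟪A, B⟫ • NormedSpace.exp (-(t • adL B)) A - ⟪A, A⟫ • B)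
        0 0 := by
      simp_rw [hC]
      exact hasDerivAt_const 0 C
    have hflow := ((hasDerivAt_exp_neg_smul_adL_apply A B 0).const_smul ⟪A, B⟫).sub_const
      (⟪A, A⟫ • B)
    have h := hflow.unique hconst
    rw [exp_neg_zero_smul_adL, one_apply_eq_self, smul_neg, neg_eq_zero, smul_eq_zero] at h
    exact h.resolve_right
      (cross_ne_zero_of_linearIndependent (LinearIndependent.pair_symm_iff.mp hAB))
  · intro h
    exact ⟨-(⟪A, A⟫ • B), fun t => by rw [h, zero_smul, zero_sub]⟩
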